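/- A stationary point of the AsK-LS Lagrangian exists if and only if the (2m+2)-dimensional linear system [[0,0,Yᵀ,0],[0,0,0,Yᵀ],[Y,0,I/γ,H],[0,Y,Hᵀ,I/γ]] · (b₁,b₂,α,β)ᵀ = (0,0,1,1)ᵀ is solvable, where H_{ij} = yᵢ ⟨φ_s(xᵢ), φ_t(x_j)⟩ y_j; i.e., eliminating ω, ν, e, h from the stationarity conditions yields exactly this system in (b₁, b₂, α, β). -/
import Mathlib


open scoped RealInnerProductSpace

theorem askls_stationarity_iff_dual_linear_system
    (d m : ℕ) (H : Type*) [NormedAddCommGroup H] [InnerProductSpace ℝ H]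
    (x : Fin m → (Fin d → ℝ)) (y : Fin m → ℝ)
    (hy : ∀ i, y i = 1 ∨ y i = -1)
    (φs φt : (Fin d → ℝ) → H) (γ : ℝ) (hγ : 0 < γ)
    (Hm : Matrix (Fin m) (Fin m) ℝ)
    (hH : ∀ i j, Hm i j = y i * ⟪φs (x i), φt (x j)⟫ * y j)
    (b₁ b₂ : ℝ) (α β : Fin m → ℝ) :
    (∃ (ω ν : H) (e h : Fin m → ℝ),
        ω = ∑ i, (β i * y i) • φt (x i) ∧
        ν = ∑ i, (α i * y i) • φs (x i) ∧
        (∑ i, α i * y i = 0) ∧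
        (∑ i, β i * y i = 0) ∧
        (∀ i, γ * e i = α i) ∧
        (∀ i, γ * h i = β i) ∧
        (∀ i, y i * (⟪ω, φs (x i)⟫ + b₁) = 1 - e i) ∧
        (∀ i, y i * (⟪ν, φt (x i)⟫ + b₂) = 1 - h i)) ↔
      ((∑ i, α i * y i = 0) ∧
       (∑ i, β i * y i = 0) ∧
       (∀ i, y i * b₁ + α i / γ + ∑ j, Hm i j * β j = 1) ∧
       (∀ i, y i * b₂ + (∑ j, Hm j i * α j) + β i / γ = 1)) := by
  have hγ' : γ ≠ 0 := ne_of_gt hγ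
  have hω : ∀ i, ⟪(∑ j, (β j * y j) • φt (x j) : H), φs (x i)⟫
      = ∑ j, β j * y j * ⟪φt (x j), φs (x i)⟫ := by
    intro i
    rw [sum_inner]
    exact Finset.sum_congr rfl fun j _ => real_inner_smul_left _ _ _
  have hν : ∀ i, ⟪(∑ j, (α j * y j) • φs (x j) : H), φt (x i)⟫
      = ∑ j, α j * y j * ⟪φs (x j), φt (x i)⟫ := by
    intro i
    rw [sum_inner]
    exact Finset.sum_congr rfl fun j _ => real_inner_smul_left _ _ _
  have key1 : ∀ i, y i * ((∑ j, β j * y j * ⟪φt (x j), φs (x i)⟫) + b₁)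
      = y i * b₁ + ∑ j, Hm i j * β j := by
    intro i
    rw [mul_add, Finset.mul_sum, add_comm]
    congr 1
    refine Finset.sum_congr rfl fun j _ => ?_
    rw [hH i j, real_inner_comm]
    ring
  have key2 : ∀ i, y i * ((∑ j, α j * y j * ⟪φs (x j), φt (x i)⟫) + b₂)
      = y i * b₂ + ∑ j, Hm j i * α j := by
    intro i
    rw [mul_add, Finset.mul_sum, add_comm]
    congr 1
    refine Finset.sum_congr rfl fun j _ => ?_
    rw [hH j i]
    ring
  constructor
  · rintro ⟨ω, ν, e, h, hωdef, hνdef, ha, hb, he, hh, h1, h2⟩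
    refine ⟨ha, hb, fun i => ?_, fun i => ?_⟩
    · have := h1 i
      rw [hωdef, hω i, key1 i] at this
      have hei : e i = α i / γ := (eq_div_iff hγ').mpr (by linarith [he i])
      rw [hei] at this
      linarith
    · have := h2 i
      rw [hνdef, hν i, key2 i] at this
      have hhi : h i = β i / γ := (eq_div_iff hγ').mpr (by linarith [hh i])
      rw [hhi] at this
      linarith
  · rintro ⟨ha, hb, h1, h2⟩
    refine ⟨_, _, fun i => α i / γ, fun i => β i / γ, rfl, rfl, ha, hb,
      fun i => by field_simp, fun i => by field_simp, fun i => ?_, fun i => ?_⟩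
    · rw [hω i, key1 i]
      have := h1 i
      linarith
    · rw [hν i, key2 i]
      have := h2 i
      linarith
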